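/- Let Γ be a group, V a Γ-module, α₁,…,α_n : Γ → ℝ group homomorphisms, and for r in a neighborhood of 0 in ℝⁿ let f_r be a smooth (in r) family of functions on a Γ-space X satisfying f_r(γx) = e^{i(r₁α₁(γ)+⋯+r_nα_n(γ))} f_r(x) for all γ ∈ Γ, with f₀ Γ-invariant. Then for every multi-index a ∈ ℕⁿ, the derivative f^{(a)}(x) := ∂_r^a f_r(x)|_{r=0} satisfies f^{(a)}|(γ−1) = Σ_{0 ≤ b < a} (iα(γ))^{a−b} (a choose b) f^{(b)}; consequently f^{(a)} is a Γ-invariant of order at most 1+|a|. -/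

import Mathlib

open Complex

/-- Partial derivative in the `i`-th coordinate direction of a function on `ℝⁿ`. -/
noncomputable def partialD {n : ℕ} (i : Fin n) (g : (Fin n → ℝ) → ℂ) : (Fin n → ℝ) → ℂ :=
  fun r => fderiv ℝ g r (Pi.single i 1)

/-- The multi-index partial derivative `∂_r^a = ∂_{r₁}^{a₁}⋯∂_{r_n}^{a_n}`. -/
noncomputable def multiD {n : ℕ} (a : Fin n → ℕ) (g : (Fin n → ℝ) → ℂ) : (Fin n → ℝ) → ℂ :=
  (List.finRange n).foldr (fun i h => (partialD i)^[a i] h) g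

section Aux
variable {n : ℕ} {V : Set (Fin n → ℝ)}

noncomputable def linC (c : Fin n → ℂ) : (Fin n → ℝ) →L[ℝ] ℂ :=
  ∑ j, c j • (Complex.ofRealCLM.comp (ContinuousLinearMap.proj j))

lemma linC_apply (c : Fin n → ℂ) (r : Fin n → ℝ) : linC c r = ∑ j, c j * (r j : ℂ) := by
  simp [linC]

lemma linC_single (c : Fin n → ℂ) (i : Fin n) : linC c (Pi.single i 1) = c i := by
  rw [linC_apply, Finset.sum_eq_single i]
  · simp
  · intro j _ hj; simp [Pi.single_apply, hj]
  · simp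

noncomputable def expC (c : Fin n → ℂ) : (Fin n → ℝ) → ℂ := fun r => Complex.exp (linC c r)

lemma expC_contDiff (c : Fin n → ℂ) : ContDiff ℝ (⊤ : ℕ∞) (expC c) :=
  Complex.contDiff_exp.comp (linC c).contDiff

lemma expC_zero (c : Fin n → ℂ) : expC c 0 = 1 := by
  simp [expC]

lemma hasFDerivAt_expC (c : Fin n → ℂ) (r : Fin n → ℝ) :
    HasFDerivAt (expC c) (expC c r • linC c) r :=
  (linC c).hasFDerivAt.cexp

lemma partialD_smooth (hV : IsOpen V) {g} (hg : ContDiffOn ℝ (⊤ : ℕ∞) g V) (i : Fin n) :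
    ContDiffOn ℝ (⊤ : ℕ∞) (partialD i g) V :=
  (hg.fderiv_of_isOpen hV (by simp)).clm_apply contDiffOn_const

lemma iter_partialD_smooth (hV : IsOpen V) {g} (hg : ContDiffOn ℝ (⊤ : ℕ∞) g V) (i : Fin n) (k : ℕ) :
    ContDiffOn ℝ (⊤ : ℕ∞) ((partialD i)^[k] g) V := by
  induction k with
  | zero => exact hg
  | succ k ih => rw [Function.iterate_succ_apply']; exact partialD_smooth hV ih i

lemma smoothOn_diffAt (hV : IsOpen V) {g : (Fin n → ℝ) → ℂ} (hg : ContDiffOn ℝ (⊤ : ℕ∞) g V)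
    {r} (hr : r ∈ V) : DifferentiableAt ℝ g r :=
  (hg.differentiableOn (by simp)).differentiableAt (hV.mem_nhds hr)

lemma partialD_congrOn (hV : IsOpen V) {g₁ g₂} (h : Set.EqOn g₁ g₂ V) (i : Fin n) :
    Set.EqOn (partialD i g₁) (partialD i g₂) V := fun r hr => by
  unfold partialD
  rw [Filter.EventuallyEq.fderiv_eq (Filter.eventuallyEq_of_mem (hV.mem_nhds hr) h)]

lemma iter_partialD_congrOn (hV : IsOpen V) {g₁ g₂} (h : Set.EqOn g₁ g₂ V) (i : Fin n) (k : ℕ) :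
    Set.EqOn ((partialD i)^[k] g₁) ((partialD i)^[k] g₂) V := by
  induction k with
  | zero => exact h
  | succ k ih =>
    rw [Function.iterate_succ_apply', Function.iterate_succ_apply']
    exact partialD_congrOn hV ih i

lemma partialD_sum {ι} (s : Finset ι) (F : ι → (Fin n → ℝ) → ℂ) {r}
    (hF : ∀ t ∈ s, DifferentiableAt ℝ (F t) r) (i : Fin n) :
    partialD i (fun r => ∑ t ∈ s, F t r) r = ∑ t ∈ s, partialD i (F t) r := by
  unfold partialD
  rw [fderiv_fun_sum hF]
  simp

lemma partialD_const_mul {g : (Fin n → ℝ) → ℂ} {r} (hg : DifferentiableAt ℝ g r) (e : ℂ)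
    (i : Fin n) : partialD i (fun r => e * g r) r = e * partialD i g r := by
  unfold partialD
  rw [fderiv_const_mul hg]
  simp

lemma partialD_expC_mul (hV : IsOpen V) {g} (hg : ContDiffOn ℝ (⊤ : ℕ∞) g V) (c : Fin n → ℂ)
    (i : Fin n) {r} (hr : r ∈ V) :
    partialD i (fun r => expC c r * g r) r
      = c i * (expC c r * g r) + expC c r * partialD i g r := by
  have hE := hasFDerivAt_expC c r
  have hg' := smoothOn_diffAt hV hg hr
  unfold partialD
  rw [fderiv_fun_mul hE.differentiableAt hg', hE.fderiv]
  simp [linC_single]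
  ring

lemma binom_shuffle (c : ℂ) (u : ℕ → ℂ) (k : ℕ) :
    ∑ m ∈ Finset.range (k+1), ((k.choose m : ℂ) * c ^ (k - m)) * (c * u m + u (m+1))
      = ∑ m ∈ Finset.range (k+2), (((k+1).choose m : ℂ) * c ^ (k+1-m)) * u m := by
  have hL : ∑ m ∈ Finset.range (k+1), ((k.choose m : ℂ) * c ^ (k - m)) * (c * u m + u (m+1))
      = (∑ m ∈ Finset.range (k+1), ((k.choose m : ℂ) * c ^ (k+1-m)) * u m)
        + ∑ m ∈ Finset.range (k+1), ((k.choose m : ℂ) * c ^ (k-m)) * u (m+1) := by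
    rw [← Finset.sum_add_distrib]
    refine Finset.sum_congr rfl fun m hm => ?_
    have hm' : m ≤ k := Nat.lt_succ_iff.mp (Finset.mem_range.mp hm)
    have : k + 1 - m = (k - m) + 1 := by omega
    rw [this, pow_succ]
    ring
  rw [hL, Finset.sum_range_succ' (fun m => (((k+1).choose m : ℂ) * c ^ (k+1-m)) * u m) (k+1)]
  have hR : ∑ m ∈ Finset.range (k+1), (((k+1).choose (m+1) : ℂ) * c ^ (k+1-(m+1))) * u (m+1)
      = (∑ m ∈ Finset.range (k+1), ((k.choose m : ℂ) * c ^ (k-m)) * u (m+1))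
        + ∑ m ∈ Finset.range (k+1), ((k.choose (m+1) : ℂ) * c ^ (k-m)) * u (m+1) := by
    rw [← Finset.sum_add_distrib]
    refine Finset.sum_congr rfl fun m hm => ?_
    have h : k + 1 - (m+1) = k - m := by omega
    rw [h, Nat.choose_succ_succ]
    push_cast
    ring
  rw [hR]
  have hshift : ∑ m ∈ Finset.range (k+1), ((k.choose (m+1) : ℂ) * c ^ (k-m)) * u (m+1)
        + (((k+1).choose 0 : ℂ) * c ^ (k+1-0)) * u 0
      = ∑ m ∈ Finset.range (k+1), ((k.choose m : ℂ) * c ^ (k+1-m)) * u m := by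
    have h2 : ∑ m ∈ Finset.range (k+2), ((k.choose m : ℂ) * c ^ (k+1-m)) * u m
        = ∑ m ∈ Finset.range (k+1), ((k.choose (m+1) : ℂ) * c ^ (k+1-(m+1))) * u (m+1)
          + ((k.choose 0 : ℂ) * c ^ (k+1-0)) * u 0 :=
      Finset.sum_range_succ' _ (k+1)
    have h3 : ∑ m ∈ Finset.range (k+2), ((k.choose m : ℂ) * c ^ (k+1-m)) * u m
        = ∑ m ∈ Finset.range (k+1), ((k.choose m : ℂ) * c ^ (k+1-m)) * u m := by
      rw [Finset.sum_range_succ]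
      simp [Nat.choose_succ_self]
    rw [← h3, h2]
    congr 1
    · refine Finset.sum_congr rfl fun m hm => ?_
      have h : k + 1 - (m+1) = k - m := by omega
      rw [h]
    · simp
  rw [← hshift]
  ring

lemma iter_partialD_const_mul (hV : IsOpen V) {g} (hg : ContDiffOn ℝ (⊤ : ℕ∞) g V) (e : ℂ)
    (i : Fin n) (k : ℕ) :
    Set.EqOn ((partialD i)^[k] (fun r => e * g r)) (fun r => e * (partialD i)^[k] g r) V := by
  induction k with
  | zero => intro r _; rfl
  | succ k ih =>
    intro r hr
    rw [Function.iterate_succ_apply', Function.iterate_succ_apply']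
    rw [partialD_congrOn hV ih i hr]
    exact partialD_const_mul (smoothOn_diffAt hV (iter_partialD_smooth hV hg i k) hr) e i

lemma iter_partialD_sum (hV : IsOpen V) {ι} (s : Finset ι) (F : ι → (Fin n → ℝ) → ℂ)
    (hF : ∀ t ∈ s, ContDiffOn ℝ (⊤ : ℕ∞) (F t) V) (i : Fin n) (k : ℕ) :
    Set.EqOn ((partialD i)^[k] (fun r => ∑ t ∈ s, F t r))
      (fun r => ∑ t ∈ s, (partialD i)^[k] (F t) r) V := by
  induction k with
  | zero => intro r _; rfl
  | succ k ih =>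
    intro r hr
    rw [Function.iterate_succ_apply']
    rw [partialD_congrOn hV ih i hr]
    rw [partialD_sum s _ (fun t ht => smoothOn_diffAt hV (iter_partialD_smooth hV (hF t ht) i k) hr) i]
    refine Finset.sum_congr rfl fun t ht => ?_
    rw [Function.iterate_succ_apply']

lemma iter_partialD_expC_mul (hV : IsOpen V) {g} (hg : ContDiffOn ℝ (⊤ : ℕ∞) g V) (c : Fin n → ℂ)
    (i : Fin n) (k : ℕ) :
    Set.EqOn ((partialD i)^[k] (fun r => expC c r * g r))
      (fun r => ∑ m ∈ Finset.range (k+1),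
        ((k.choose m : ℂ) * c i ^ (k - m)) * (expC c r * (partialD i)^[m] g r)) V := by
  induction k with
  | zero => intro r _; simp
  | succ k ih =>
    intro r hr
    rw [Function.iterate_succ_apply']
    rw [partialD_congrOn hV ih i hr]
    have hterm : ∀ m : ℕ, ContDiffOn ℝ (⊤ : ℕ∞) (fun r => expC c r * (partialD i)^[m] g r) V :=
      fun m => ((expC_contDiff c).contDiffOn).mul (iter_partialD_smooth hV hg i m)
    rw [partialD_sum (Finset.range (k+1)) _
      (fun m _ => (smoothOn_diffAt hV (hterm m) hr).const_mul _) i]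
    have hper : ∀ m ∈ Finset.range (k+1),
        partialD i (fun r => ((k.choose m : ℂ) * c i ^ (k - m)) * (expC c r * (partialD i)^[m] g r)) r
          = ((k.choose m : ℂ) * c i ^ (k - m)) *
              (c i * (expC c r * (partialD i)^[m] g r) + expC c r * (partialD i)^[m+1] g r) := by
      intro m _
      rw [partialD_const_mul (smoothOn_diffAt hV (hterm m) hr) _ i]
      rw [partialD_expC_mul hV (iter_partialD_smooth hV hg i m) c i hr]
      rw [← Function.iterate_succ_apply' (partialD i) m g]
    rw [Finset.sum_congr rfl hper]
    exact binom_shuffle (c i) (fun m => expC c r * (partialD i)^[m] g r) k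

noncomputable def multiDL (l : List (Fin n)) (a : Fin n → ℕ) (g : (Fin n → ℝ) → ℂ) :
    (Fin n → ℝ) → ℂ :=
  l.foldr (fun i h => (partialD i)^[a i] h) g

lemma multiD_eq_multiDL (a : Fin n → ℕ) (g : (Fin n → ℝ) → ℂ) :
    multiD a g = multiDL (List.finRange n) a g := rfl

lemma multiDL_cons (i : Fin n) (l : List (Fin n)) (a : Fin n → ℕ) (g) :
    multiDL (i :: l) a g = (partialD i)^[a i] (multiDL l a g) := rfl

lemma multiDL_smooth (hV : IsOpen V) (l : List (Fin n)) (a : Fin n → ℕ) {g}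
    (hg : ContDiffOn ℝ (⊤ : ℕ∞) g V) : ContDiffOn ℝ (⊤ : ℕ∞) (multiDL l a g) V := by
  induction l with
  | nil => exact hg
  | cons i l ih => exact iter_partialD_smooth hV ih i (a i)

lemma multiDL_congrOn (hV : IsOpen V) (l : List (Fin n)) (a : Fin n → ℕ) {g₁ g₂}
    (h : Set.EqOn g₁ g₂ V) : Set.EqOn (multiDL l a g₁) (multiDL l a g₂) V := by
  induction l with
  | nil => exact h
  | cons i l ih => exact iter_partialD_congrOn hV ih i (a i)

lemma multiDL_exp_congr (l : List (Fin n)) {b₁ b₂ : Fin n → ℕ}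
    (h : ∀ j ∈ l, b₁ j = b₂ j) (g : (Fin n → ℝ) → ℂ) : multiDL l b₁ g = multiDL l b₂ g := by
  induction l with
  | nil => rfl
  | cons i l ih =>
    rw [multiDL_cons, multiDL_cons, h i (List.mem_cons_self (a := i) (l := l)),
      ih (fun j hj => h j (List.mem_cons_of_mem i hj))]

lemma coeff_update (c : Fin n → ℂ) (a b : Fin n → ℕ) (i : Fin n) (m : ℕ) (hb : b i = a i) :
    (∏ j, c j ^ (a j - Function.update b i m j) * (((a j).choose (Function.update b i m j)) : ℂ))
      = (c i ^ (a i - m) * ((a i).choose m : ℂ))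
        * ∏ j, c j ^ (a j - b j) * ((a j).choose (b j) : ℂ) := by
  rw [Finset.prod_eq_mul_prod_sdiff_singleton_of_mem (Finset.mem_univ i)
      (fun j => c j ^ (a j - Function.update b i m j) * (((a j).choose (Function.update b i m j)) : ℂ)),
    Finset.prod_eq_mul_prod_sdiff_singleton_of_mem (Finset.mem_univ i)
      (fun j => c j ^ (a j - b j) * (((a j).choose (b j)) : ℂ))]
  have h1 : ∀ j ∈ Finset.univ \ {i}, c j ^ (a j - Function.update b i m j)
      * (((a j).choose (Function.update b i m j)) : ℂ) = c j ^ (a j - b j) * (((a j).choose (b j)) : ℂ) := by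
    intro j hj
    have hji : j ≠ i := by simpa using (Finset.mem_sdiff.mp hj).2
    rw [Function.update_of_ne hji]
  rw [Finset.prod_congr rfl h1, Function.update_self, hb]
  simp [Nat.choose_self]

lemma multiDL_expC_mul (hV : IsOpen V) (c : Fin n → ℂ) (a : Fin n → ℕ) {g}
    (hg : ContDiffOn ℝ (⊤ : ℕ∞) g V) :
    ∀ l : List (Fin n), l.Nodup →
      Set.EqOn (multiDL l a (fun r => expC c r * g r))
        (fun r => ∑ b ∈ (Finset.Icc 0 a).filter (fun b => ∀ j, j ∉ l → b j = a j),
          (∏ j, c j ^ (a j - b j) * ((a j).choose (b j) : ℂ))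
            * (expC c r * multiDL l b g r)) V := by
  intro l
  induction l with
  | nil =>
    intro _ r hr
    have hs : (Finset.Icc 0 a).filter (fun b => ∀ j, j ∉ ([] : List (Fin n)) → b j = a j)
        = {a} := by
      ext b
      simp only [Finset.mem_filter, Finset.mem_Icc, Finset.mem_singleton, List.not_mem_nil,
        not_false_iff, forall_const]
      constructor
      · rintro ⟨-, h⟩
        funext j
        exact h j
      · rintro rfl
        exact ⟨⟨fun j => Nat.zero_le _, le_refl _⟩, fun j => rfl⟩
    simp only [hs, Finset.sum_singleton, Nat.sub_self, pow_zero, Nat.choose_self,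
      Nat.cast_one, mul_one, one_mul, Finset.prod_const_one]
    rfl
  | cons i l' ih =>
    intro hnd r hr
    have hi : i ∉ l' := (List.nodup_cons.mp hnd).1
    have hnd' : l'.Nodup := (List.nodup_cons.mp hnd).2
    set S' := (Finset.Icc 0 a).filter (fun b => ∀ j, j ∉ l' → b j = a j) with hS'
    have hbS' : ∀ b ∈ S', b ≤ a ∧ ∀ j, j ∉ l' → b j = a j := by
      intro b hb
      have := Finset.mem_filter.mp hb
      exact ⟨(Finset.mem_Icc.mp this.1).2, this.2⟩
    have hDL : ∀ b : Fin n → ℕ, ContDiffOn ℝ (⊤ : ℕ∞) (multiDL l' b g) V :=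
      fun b => multiDL_smooth hV l' b hg
    have hterm : ∀ b : Fin n → ℕ, ContDiffOn ℝ (⊤ : ℕ∞)
        (fun r => (∏ j, c j ^ (a j - b j) * ((a j).choose (b j) : ℂ))
          * (expC c r * multiDL l' b g r)) V :=
      fun b => contDiffOn_const.mul (((expC_contDiff c).contDiffOn).mul (hDL b))
    have hper : ∀ b ∈ S',
        (partialD i)^[a i] (fun r => (∏ j, c j ^ (a j - b j) * ((a j).choose (b j) : ℂ))
            * (expC c r * multiDL l' b g r)) r
        = ∑ m ∈ Finset.range (a i + 1),
            (∏ j, c j ^ (a j - b j) * ((a j).choose (b j) : ℂ))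
              * ((((a i).choose m : ℂ) * c i ^ (a i - m))
                * (expC c r * multiDL (i :: l') (Function.update b i m) g r)) := by
      intro b hb
      have hDLu : ∀ m : ℕ, multiDL (i :: l') (Function.update b i m) g
          = (partialD i)^[m] (multiDL l' b g) := by
        intro m
        rw [multiDL_cons, Function.update_self,
          multiDL_exp_congr l' (fun j hj => Function.update_of_ne
            (fun h => hi (by rw [← h]; exact hj)) m b) g]
      simp only [hDLu]
      simp only [iter_partialD_const_mul hV (((expC_contDiff c).contDiffOn).mul (hDL b)) _ i (a i) hr]
      simp only [iter_partialD_expC_mul hV (hDL b) c i (a i) hr]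
      rw [Finset.mul_sum]
    rw [multiDL_cons]
    simp only [iter_partialD_congrOn hV (ih hnd') i (a i) hr]
    simp only [iter_partialD_sum hV S' _ (fun b _ => hterm b) i (a i) hr]
    rw [Finset.sum_congr rfl hper]
    rw [← Finset.sum_product']
    refine Finset.sum_nbij' (fun p => Function.update p.1 i p.2)
      (fun b' => (Function.update b' i (a i), b' i)) ?_ ?_ ?_ ?_ ?_
    · rintro ⟨b, m⟩ hp
      dsimp only
      obtain ⟨hb, hm⟩ := Finset.mem_product.mp hp
      have hm' : m ≤ a i := Nat.lt_succ_iff.mp (Finset.mem_range.mp hm)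
      obtain ⟨hba, hbl⟩ := hbS' b hb
      refine Finset.mem_filter.mpr ⟨Finset.mem_Icc.mpr ⟨fun j => Nat.zero_le _, fun j => ?_⟩,
        fun j hj => ?_⟩
      · rcases eq_or_ne j i with rfl | hji
        · rw [Function.update_self]; exact hm'
        · rw [Function.update_of_ne hji]; exact hba j
      · have hji : j ≠ i := fun h => hj (h ▸ List.mem_cons_self (a := i) (l := l'))
        have hjl : j ∉ l' := fun h => hj (List.mem_cons_of_mem i h)
        rw [Function.update_of_ne hji]
        exact hbl j hjl
    · intro b' hb'
      obtain ⟨hb'I, hb'l⟩ := Finset.mem_filter.mp hb'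
      have hb'a : b' ≤ a := (Finset.mem_Icc.mp hb'I).2
      refine Finset.mem_product.mpr ⟨Finset.mem_filter.mpr ⟨Finset.mem_Icc.mpr
        ⟨fun j => Nat.zero_le _, fun j => ?_⟩, fun j hj => ?_⟩,
        Finset.mem_range.mpr (Nat.lt_succ_of_le (hb'a i))⟩
      · show Function.update b' i (a i) j ≤ a j
        rcases eq_or_ne j i with rfl | hji
        · rw [Function.update_self]
        · rw [Function.update_of_ne hji]; exact hb'a j
      · show Function.update b' i (a i) j = a j
        rcases eq_or_ne j i with rfl | hji
        · rw [Function.update_self]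
        · rw [Function.update_of_ne hji]
          exact hb'l j (by simp [hji, hj])
    · rintro ⟨b, m⟩ hp
      dsimp only
      obtain ⟨hb, -⟩ := Finset.mem_product.mp hp
      have hbi : b i = a i := (hbS' b hb).2 i hi
      simp only [Prod.mk.injEq]
      refine ⟨?_, ?_⟩
      · rw [Function.update_idem, ← hbi, Function.update_eq_self]
      · rw [Function.update_self]
    · intro b' hb'
      dsimp only
      simp only [Function.update_idem, Function.update_eq_self]
    · rintro ⟨b, m⟩ hp
      dsimp only
      obtain ⟨hb, -⟩ := Finset.mem_product.mp hp
      have hbi : b i = a i := (hbS' b hb).2 i hi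
      rw [coeff_update c a b i m hbi]
      ring

end Aux

/-- Higher order invariants in the functions on a `Γ`-space `X`, for the action
`(f|γ)(x) = f(γ·x)`: level `0` is `{0}`, level `q+1` is
`{f : ∀ γ, f|(γ−1) ∈ level q}`. -/
def HigherInvFn (Γ X : Type*) [Group Γ] [MulAction Γ X] : ℕ → Set (X → ℂ)
  | 0 => {0}
  | q + 1 => {h | ∀ γ : Γ, (fun x => h (γ • x)) - h ∈ HigherInvFn Γ X q}

section Hinv
variable {Γ X : Type*} [Group Γ] [MulAction Γ X]

lemma hinv_zero (q : ℕ) : (0 : X → ℂ) ∈ HigherInvFn Γ X q := by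
  induction q with
  | zero => rfl
  | succ q ih =>
    intro γ
    have h : (fun x => (0 : X → ℂ) (γ • x)) - 0 = (0 : X → ℂ) := by
      funext x; simp
    rw [h]
    exact ih

lemma hinv_add {q : ℕ} {h₁ h₂ : X → ℂ} (H1 : h₁ ∈ HigherInvFn Γ X q)
    (H2 : h₂ ∈ HigherInvFn Γ X q) : h₁ + h₂ ∈ HigherInvFn Γ X q := by
  induction q generalizing h₁ h₂ with
  | zero =>
    rw [Set.mem_singleton_iff.mp H1, Set.mem_singleton_iff.mp H2]
    simp [HigherInvFn]
  | succ q ih =>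
    intro γ
    have h : (fun x => (h₁ + h₂) (γ • x)) - (h₁ + h₂)
        = ((fun x => h₁ (γ • x)) - h₁) + ((fun x => h₂ (γ • x)) - h₂) := by
      funext x; simp; ring
    rw [h]
    exact ih (H1 γ) (H2 γ)

lemma hinv_smul {q : ℕ} (e : ℂ) {h : X → ℂ} (H : h ∈ HigherInvFn Γ X q) :
    e • h ∈ HigherInvFn Γ X q := by
  induction q generalizing h with
  | zero =>
    rw [Set.mem_singleton_iff.mp H]
    simp [HigherInvFn]
  | succ q ih =>
    intro γ
    have he : (fun x => (e • h) (γ • x)) - e • h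
        = e • ((fun x => h (γ • x)) - h) := by
      funext x; simp; ring
    rw [he]
    exact ih (H γ)

lemma hinv_mono {q : ℕ} : HigherInvFn Γ X q ⊆ HigherInvFn Γ X (q + 1) := by
  induction q with
  | zero =>
    intro h hh
    rw [Set.mem_singleton_iff.mp hh]
    intro γ
    have : (fun x => (0 : X → ℂ) (γ • x)) - 0 = (0 : X → ℂ) := by funext x; simp
    rw [this]
    rfl
  | succ q ih =>
    intro h hh γ
    exact ih (hh γ)

lemma hinv_le {q q' : ℕ} (hq : q ≤ q') : HigherInvFn Γ X q ⊆ HigherInvFn Γ X q' := by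
  induction hq with
  | refl => exact subset_rfl
  | step _ ih => exact fun h hh => hinv_mono (ih hh)

lemma hinv_sum {ι : Type*} (s : Finset ι) (F : ι → X → ℂ) {q : ℕ}
    (hF : ∀ t ∈ s, F t ∈ HigherInvFn Γ X q) : (∑ t ∈ s, F t) ∈ HigherInvFn Γ X q := by
  classical
  induction s using Finset.cons_induction with
  | empty => simpa using hinv_zero q
  | cons t s hts ih =>
    rw [Finset.sum_cons]
    exact hinv_add (hF t (Finset.mem_cons_self t s)) (ih fun u hu => hF u (Finset.mem_cons_of_mem hu))

end Hinv

section Part1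
variable {Γ X : Type*} [Group Γ] [MulAction Γ X] {n : ℕ}

lemma part1_lemma (α : Fin n → Γ → ℝ)
    (U : Set (Fin n → ℝ)) (hU : U ∈ nhds (0 : Fin n → ℝ))
    (f : (Fin n → ℝ) → X → ℂ)
    (hsmooth : ∀ x : X, ContDiffOn ℝ (⊤ : ℕ∞) (fun r => f r x) U)
    (htrans : ∀ r ∈ U, ∀ (γ : Γ) (x : X),
      f r (γ • x) = Complex.exp (Complex.I * ∑ j, (r j : ℂ) * (α j γ : ℂ)) * f r x)
    (a : Fin n → ℕ) (γ : Γ) (x : X) :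
    multiD a (fun r => f r (γ • x)) 0 - multiD a (fun r => f r x) 0 =
      ∑ b ∈ Finset.Icc (0 : Fin n → ℕ) a \ {a},
        (∏ j, (Complex.I * (α j γ : ℂ)) ^ (a j - b j)) *
          (∏ j, ((a j).choose (b j) : ℂ)) * multiD b (fun r => f r x) 0 := by
  classical
  set V := interior U with hVdef
  have hV : IsOpen V := isOpen_interior
  have h0 : (0 : Fin n → ℝ) ∈ V := mem_interior_iff_mem_nhds.mpr hU
  set c : Fin n → ℂ := fun j => Complex.I * (α j γ : ℂ) with hc
  set g : (Fin n → ℝ) → ℂ := fun r => f r x with hgdef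
  have hg : ContDiffOn ℝ (⊤ : ℕ∞) g V := (hsmooth x).mono interior_subset
  have hEq : Set.EqOn (fun r => f r (γ • x)) (fun r => expC c r * g r) V := by
    intro r hr
    show f r (γ • x) = expC c r * g r
    rw [htrans r (interior_subset hr) γ x]
    have harg : (Complex.I * ∑ j, (r j : ℂ) * (α j γ : ℂ)) = linC c r := by
      rw [linC_apply, Finset.mul_sum]
      refine Finset.sum_congr rfl fun j _ => ?_
      simp only [hc]
      ring
    rw [harg]
    rfl
  have key1 : multiD a (fun r => f r (γ • x)) 0
      = ∑ b ∈ Finset.Icc (0 : Fin n → ℕ) a,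
          (∏ j, c j ^ (a j - b j) * ((a j).choose (b j) : ℂ)) * multiD b g 0 := by
    have h1 : multiD a (fun r => f r (γ • x)) 0
        = multiDL (List.finRange n) a (fun r => expC c r * g r) 0 :=
      multiDL_congrOn hV (List.finRange n) a hEq h0
    have h2 := multiDL_expC_mul hV c a hg (List.finRange n) (List.nodup_finRange n) h0
    rw [h1, h2]
    rw [Finset.filter_true_of_mem (fun b _ => fun j hj => absurd (List.mem_finRange j) hj)]
    simp only [expC_zero, one_mul]
    rfl
  have hamem : a ∈ Finset.Icc (0 : Fin n → ℕ) a :=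
    Finset.mem_Icc.mpr ⟨fun j => Nat.zero_le _, le_refl a⟩
  rw [key1, Finset.sum_eq_sum_sdiff_singleton_add hamem]
  have hca : (∏ j, c j ^ (a j - a j) * ((a j).choose (a j) : ℂ)) = 1 := by
    simp [Nat.choose_self]
  rw [hca, one_mul, add_sub_cancel_right]
  refine Finset.sum_congr rfl fun b _ => ?_
  rw [Finset.prod_mul_distrib]

end Part1

/-- Differentiation of a family of automorphic functions with character
`χ_r(γ) = e^{i(r₁α₁(γ)+⋯+r_nα_n(γ))}` on a neighborhood `U` of `0`: for every multi-index
`a`, the derivative `f^{(a)}(x) = ∂_r^a f_r(x)|_{r=0}` satisfies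
`f^{(a)}|(γ−1) = Σ_{0 ≤ b < a} (iα(γ))^{a−b} (a choose b) f^{(b)}`,
and consequently `f^{(a)}` is a `Γ`-invariant of order at most `1 + |a|`. -/
theorem stmt4 {Γ X : Type*} [Group Γ] [MulAction Γ X] {n : ℕ}
    (α : Fin n → Γ → ℝ) (hα : ∀ j γ δ, α j (γ * δ) = α j γ + α j δ)
    (U : Set (Fin n → ℝ)) (hU : U ∈ nhds (0 : Fin n → ℝ))
    (f : (Fin n → ℝ) → X → ℂ)
    (hsmooth : ∀ x : X, ContDiffOn ℝ (⊤ : ℕ∞) (fun r => f r x) U)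
    (htrans : ∀ r ∈ U, ∀ (γ : Γ) (x : X),
      f r (γ • x) = Complex.exp (I * ∑ j, (r j : ℂ) * (α j γ : ℂ)) * f r x)
    (a : Fin n → ℕ) :
    (∀ (γ : Γ) (x : X),
        multiD a (fun r => f r (γ • x)) 0 - multiD a (fun r => f r x) 0 =
          ∑ b ∈ Finset.Icc (0 : Fin n → ℕ) a \ {a},
            (∏ j, (I * (α j γ : ℂ)) ^ (a j - b j)) *
              (∏ j, ((a j).choose (b j) : ℂ)) * multiD b (fun r => f r x) 0) ∧
    (fun x => multiD a (fun r => f r x) 0) ∈ HigherInvFn Γ X (1 + ∑ j, a j) := by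
  classical
  have P1 := part1_lemma α U hU f hsmooth htrans
  refine ⟨fun γ x => P1 a γ x, ?_⟩
  have key : ∀ N : ℕ, ∀ a : Fin n → ℕ, (∑ j, a j) = N →
      (fun x => multiD a (fun r => f r x) 0) ∈ HigherInvFn Γ X (1 + ∑ j, a j) := by
    intro N
    induction N using Nat.strong_induction_on with
    | _ N IH =>
      intro a hN
      rw [Nat.add_comm 1 (∑ j, a j)]
      intro γ
      have hdiff : (fun x => multiD a (fun r => f r (γ • x)) 0)
            - (fun x => multiD a (fun r => f r x) 0)
          = ∑ b ∈ Finset.Icc (0 : Fin n → ℕ) a \ {a},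
              ((∏ j, (Complex.I * (α j γ : ℂ)) ^ (a j - b j)) * (∏ j, ((a j).choose (b j) : ℂ)))
                • (fun x => multiD b (fun r => f r x) 0) := by
        funext x
        have := P1 a γ x
        simp only [Pi.sub_apply, Finset.sum_apply, Pi.smul_apply, smul_eq_mul]
        rw [this]
      rw [hdiff]
      refine hinv_sum _ _ fun b hb => ?_
      obtain ⟨hbI, hbna⟩ := Finset.mem_sdiff.mp hb
      have hba : b ≤ a := (Finset.mem_Icc.mp hbI).2
      have hbne : b ≠ a := by simpa using hbna
      have hlt : (∑ j, b j) < ∑ j, a j := by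
        obtain ⟨j0, hj0⟩ := Function.ne_iff.mp hbne
        exact Finset.sum_lt_sum (fun j _ => hba j)
          ⟨j0, Finset.mem_univ j0, lt_of_le_of_ne (hba j0) hj0⟩
      have hmem := IH (∑ j, b j) (hN ▸ hlt) b rfl
      exact hinv_le (by omega) (hinv_smul _ hmem)
  exact key (∑ j, a j) a rfl
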